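/- Two-point equalizer strategies in the continuous Donation Game: In the continuous Donation Game, let 0 ≤ γ ≤ b(K) − c(K) and let λ ∈ (0,1) satisfy λ ≥ c(K)/b(K). Let p_0 ∈ [0,1] satisfy max{ (γ − λ·b(K) + c(K)) / ((1−λ)·b(K)), 0 } ≤ p_0 ≤ min{ γ / ((1−λ)·b(K)), 1 }. Define, for y ∈ [0,K], p(y) = (1/λ)·( (c(y) + γ)/b(K) − (1−λ)·p_0 ). Then 0 ≤ p(y) ≤ 1 for every y ∈ [0,K], and the memory-one strategy σ_X[x,y] = (1 − p(y))·δ_0 + p(y)·δ_K with initial action σ_X^0 = (1−p_0)·δ_0 + p_0·δ_K satisfies: for every play sequence (ν_t)_{t≥0} compatible with (σ_X^0, σ_X), the opponent's expected discounted payoff satisfies π_Y = γ. -/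

import Mathlib

open MeasureTheory ProbabilityTheory

/-! At every round X's action is `0` or `K`, with `P(x_0 = K) = p₀` and
`P(x_{t+1} = K) = E[p(y_t)]`. As `b(0) = 0`, Y's expected benefit is `B_t = b(K) P(x_t = K)`, and
since `p` is affine in `c` this gives `λ B_{t+1} = C_t + κ` with `C_t = E[c(y_t)]` and
`κ = γ - (1 - λ) p₀ b(K)`. Against the weights `λ^t` this telescopes:
`(1 - λ) ∑ λ^t (B_t - C_t) = (1 - λ) B_0 + κ = γ`. -/

section TwoPoint

variable {α : Type*} [MeasurableSpace α]

noncomputable def twoPointMeasure (a b : α) (r : ℝ) : Measure α :=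
  ENNReal.ofReal (1 - r) • Measure.dirac a + ENNReal.ofReal r • Measure.dirac b

theorem integrable_twoPointMeasure [MeasurableSingletonClass α] (a b : α) (r : ℝ) (f : α → ℝ) :
    Integrable f (twoPointMeasure a b r) :=
  .add_measure ((integrable_dirac (by simp)).smul_measure ENNReal.ofReal_ne_top)
    ((integrable_dirac (by simp)).smul_measure ENNReal.ofReal_ne_top)

theorem integral_twoPointMeasure [MeasurableSingletonClass α] {r : ℝ} (hr : r ∈ Set.Icc 0 1)
    (a b : α) (f : α → ℝ) :
    ∫ x, f x ∂twoPointMeasure a b r = (1 - r) * f a + r * f b := by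
  have hint : ∀ (s : ℝ) (x : α), Integrable f (ENNReal.ofReal s • Measure.dirac x) :=
    fun s x => (integrable_dirac (by simp)).smul_measure ENNReal.ofReal_ne_top
  rw [twoPointMeasure, integral_add_measure (hint _ _) (hint _ _), integral_smul_measure,
    integral_smul_measure, integral_dirac, integral_dirac,
    ENNReal.toReal_ofReal (by linarith [hr.2]), ENNReal.toReal_ofReal hr.1, smul_eq_mul, smul_eq_mul]

theorem lintegral_twoPointMeasure_apply {β : Type*} [MeasurableSpace β] {μ : Measure β}
    [IsProbabilityMeasure μ] {g : β → ℝ} (hg : Measurable g) (hg01 : ∀ x, g x ∈ Set.Icc 0 1)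
    (a b : α) (s : Set α) :
    ∫⁻ x, twoPointMeasure a b (g x) s ∂μ = twoPointMeasure a b (∫ x, g x ∂μ) s := by
  have hint : Integrable g μ := .of_mem_Icc 0 1 hg.aemeasurable (ae_of_all _ hg01)
  have hofReal : ∀ f : β → ℝ, Integrable f μ → (∀ x, 0 ≤ f x) →
      ∫⁻ x, ENNReal.ofReal (f x) ∂μ = ENNReal.ofReal (∫ x, f x ∂μ) := fun f hf hf0 =>
    (ofReal_integral_eq_lintegral_ofReal hf (ae_of_all _ hf0)).symm
  simp only [twoPointMeasure, Measure.add_apply, Measure.smul_apply, smul_eq_mul]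
  rw [lintegral_add_left (by fun_prop), lintegral_mul_const _ (by fun_prop),
    lintegral_mul_const _ (by fun_prop), hofReal g hint (fun x => (hg01 x).1),
    hofReal (fun x => 1 - g x) ((integrable_const 1).sub hint) (fun x => by linarith [(hg01 x).2]),
    integral_sub (integrable_const 1) hint, integral_const, probReal_univ, one_smul]

end TwoPoint

theorem integral_mem_Icc_of_mem_Icc {α : Type*} [MeasurableSpace α] {μ : Measure α}
    [IsProbabilityMeasure μ] {f : α → ℝ} {m M : ℝ} (hf : AEMeasurable f μ)
    (h : ∀ x, f x ∈ Set.Icc m M) : ∫ x, f x ∂μ ∈ Set.Icc m M := by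
  have hint : Integrable f μ := .of_mem_Icc m M hf (ae_of_all _ h)
  constructor
  · simpa using integral_mono (integrable_const m) hint fun x => (h x).1
  · simpa using integral_mono hint (integrable_const M) fun x => (h x).2

theorem summable_pow_mul_of_abs_le {lam M : ℝ} {C : ℕ → ℝ} (hlam0 : 0 ≤ lam) (hlam1 : lam < 1)
    (hC : ∀ t, |C t| ≤ M) : Summable fun t => lam ^ t * C t :=
  .of_norm_bounded ((summable_geometric_of_lt_one hlam0 hlam1).mul_right M) fun t => by
    rw [norm_mul, norm_pow, Real.norm_of_nonneg hlam0, Real.norm_eq_abs]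
    exact mul_le_mul_of_nonneg_left (hC t) (by positivity)

theorem discounted_tsum_sub_of_recursion {lam κ : ℝ} {B C : ℕ → ℝ} (hlam0 : 0 ≤ lam)
    (hlam1 : lam < 1) (hC : Summable fun t => lam ^ t * C t)
    (hrec : ∀ t, lam * B (t + 1) = C t + κ) :
    (1 - lam) * ∑' t, lam ^ t * (B t - C t) = (1 - lam) * B 0 + κ := by
  have hgeo := summable_geometric_of_lt_one hlam0 hlam1
  have hshift : ∀ t, lam ^ (t + 1) * B (t + 1) = lam ^ t * C t + lam ^ t * κ := fun t => by
    rw [pow_succ, mul_assoc, hrec t]; ring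
  have hshift_summable : Summable fun t => lam ^ (t + 1) * B (t + 1) := by
    simp_rw [hshift]; exact hC.add (hgeo.mul_right κ)
  have hB : Summable fun t => lam ^ t * B t := (summable_nat_add_iff 1).mp hshift_summable
  simp_rw [mul_sub]
  rw [hB.tsum_sub hC, hB.tsum_eq_zero_add, tsum_congr hshift, hC.tsum_add (hgeo.mul_right κ),
    tsum_mul_right, tsum_geometric_of_lt_one hlam0 hlam1]
  field_simp [show (1 - lam) ≠ 0 by linarith]
  ring

theorem MeasureTheory.Measure.fst_eq_of_apply_prod_univ {α β : Type*} [MeasurableSpace α]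
    [MeasurableSpace β] {ρ : Measure (α × β)} {m : Measure α}
    (h : ∀ E, MeasurableSet E → ρ (E ×ˢ Set.univ) = m E) : ρ.fst = m :=
  Measure.ext fun E hE => by rw [Measure.fst_apply hE, ← Set.prod_univ, h E hE]

section TwoPointPlay

variable {α β : Type*} [MeasurableSpace α] [MeasurableSingletonClass α] [MeasurableSpace β]
  {a b : α}

theorem integrable_comp_fst_of_fst_eq_twoPointMeasure {ρ : Measure (α × β)} {r : ℝ}
    (hρ : ρ.fst = twoPointMeasure a b r) {f : α → ℝ} (hf : Measurable f) :
    Integrable (fun q => f q.1) ρ :=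
  (integrable_map_measure hf.aestronglyMeasurable measurable_fst.aemeasurable).mp
    (show Integrable f ρ.fst from hρ ▸ integrable_twoPointMeasure a b r f)

theorem integral_comp_fst_of_fst_eq_twoPointMeasure {ρ : Measure (α × β)} {r : ℝ}
    (hρ : ρ.fst = twoPointMeasure a b r) (hr : r ∈ Set.Icc 0 1) {f : α → ℝ} (hf : Measurable f) :
    ∫ q, f q.1 ∂ρ = (1 - r) * f a + r * f b := by
  rw [← integral_twoPointMeasure hr, ← hρ, Measure.fst,
    integral_map measurable_fst.aemeasurable hf.aestronglyMeasurable]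

theorem discounted_payoff_of_fst_eq_twoPointMeasure {ν : ℕ → Measure (α × β)}
    [∀ t, IsProbabilityMeasure (ν t)] {f : α → ℝ} {g h : β → ℝ} {lam κ r M : ℝ}
    (hlam0 : 0 ≤ lam) (hlam1 : lam < 1) (hf : Measurable f) (hfa : f a = 0) (hg : Measurable g)
    (hg01 : ∀ y, g y ∈ Set.Icc 0 1) (hh : Measurable h) (hhM : ∀ y, |h y| ≤ M)
    (hgh : ∀ y, lam * f b * g y = h y + κ) (hr : r ∈ Set.Icc 0 1)
    (h0 : (ν 0).fst = twoPointMeasure a b r)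
    (hsucc : ∀ t, (ν (t + 1)).fst = twoPointMeasure a b (∫ q, g q.2 ∂ν t)) :
    (1 - lam) * ∑' t, lam ^ t * ∫ q, (f q.1 - h q.2) ∂ν t = (1 - lam) * r * f b + κ := by
  have hfint : ∀ t, Integrable (fun q => f q.1) (ν t) := by
    rintro (_ | t)
    exacts [integrable_comp_fst_of_fst_eq_twoPointMeasure h0 hf,
      integrable_comp_fst_of_fst_eq_twoPointMeasure (hsucc t) hf]
  have hhnorm : ∀ q : α × β, ‖h q.2‖ ≤ M := fun q => (Real.norm_eq_abs _).trans_le (hhM q.2)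
  have hhint : ∀ t, Integrable (fun q => h q.2) (ν t) := fun t =>
    .of_bound (hh.comp measurable_snd).aestronglyMeasurable M (ae_of_all _ hhnorm)
  have hhabs : ∀ t, |∫ q, h q.2 ∂ν t| ≤ M := fun t => by
    simpa using norm_integral_le_of_norm_le_const (μ := ν t) (ae_of_all _ hhnorm)
  have hrec : ∀ t, lam * ∫ q, f q.1 ∂ν (t + 1) = ∫ q, h q.2 ∂ν t + κ := fun t => by
    have hgν := integral_mem_Icc_of_mem_Icc (μ := ν t) (f := fun q => g q.2)
      (hg.comp measurable_snd).aemeasurable fun q => hg01 q.2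
    calc lam * ∫ q, f q.1 ∂ν (t + 1) = ∫ q, lam * f b * g q.2 ∂ν t := by
          rw [integral_comp_fst_of_fst_eq_twoPointMeasure (hsucc t) hgν hf, hfa,
            integral_const_mul]
          ring
      _ = ∫ q, h q.2 ∂ν t + κ := by
          simp_rw [hgh]
          rw [integral_add (hhint t) (integrable_const κ), integral_const, probReal_univ, one_smul]
  simp_rw [integral_sub (hfint _) (hhint _)]
  rw [discounted_tsum_sub_of_recursion hlam0 hlam1 (summable_pow_mul_of_abs_le hlam0 hlam1 hhabs)
    hrec, integral_comp_fst_of_fst_eq_twoPointMeasure h0 hr hf, hfa]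
  ring

end TwoPointPlay

theorem equalizer_reaction_mem_Icc {bK cK cy γ lam p₀ : ℝ} (hbK : 0 < bK) (hlam : 0 < lam)
    (hcy : cy ∈ Set.Icc 0 cK) (hlow : γ - lam * bK + cK ≤ p₀ * ((1 - lam) * bK))
    (hup : p₀ * ((1 - lam) * bK) ≤ γ) :
    1 / lam * ((cy + γ) / bK - (1 - lam) * p₀) ∈ Set.Icc 0 1 := by
  constructor
  · apply mul_nonneg (by positivity)
    rw [sub_nonneg, le_div_iff₀ hbK]
    nlinarith [hcy.1]
  · rw [one_div, inv_mul_le_iff₀ hlam, mul_one, sub_le_iff_le_add, div_le_iff₀ hbK]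
    nlinarith [hcy.2]

theorem donation_two_point_equalizer_general
    (K : ℝ) (hK : 0 < K)
    (b c : Set.Icc (0 : ℝ) K → ℝ) (hcm : Monotone c)
    (hbmeas : Measurable b) (hcmeas : Measurable c)
    (zero top : Set.Icc (0 : ℝ) K) (hzero : (zero : ℝ) = 0) (htop : (top : ℝ) = K)
    (hb0 : b zero = 0) (hc0 : c zero = 0)
    (hbc : ∀ s : Set.Icc (0 : ℝ) K, 0 < (s : ℝ) → c s < b s)
    (γ : ℝ)
    (lam : ℝ) (hlam : lam ∈ Set.Ioo (0 : ℝ) 1)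
    (p₀ : ℝ) (hp₀ : p₀ ∈ Set.Icc (0 : ℝ) 1)
    (hp₀l : max ((γ - lam * b top + c top) / ((1 - lam) * b top)) 0 ≤ p₀)
    (hp₀u : p₀ ≤ min (γ / ((1 - lam) * b top)) 1)
    (p : Set.Icc (0 : ℝ) K → ℝ)
    (hp : ∀ y, p y = (1 / lam) * ((c y + γ) / b top - (1 - lam) * p₀))
    (σX : Kernel (Set.Icc (0 : ℝ) K × Set.Icc (0 : ℝ) K) (Set.Icc (0 : ℝ) K))
    (hσX : ∀ x y, σX (x, y) =
      ENNReal.ofReal (1 - p y) • Measure.dirac zero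
        + ENNReal.ofReal (p y) • Measure.dirac top)
    (σ0 : Measure (Set.Icc (0 : ℝ) K))
    (hσ0 : σ0 = ENNReal.ofReal (1 - p₀) • Measure.dirac zero
        + ENNReal.ofReal p₀ • Measure.dirac top) :
    (∀ y, 0 ≤ p y ∧ p y ≤ 1) ∧
    (∀ ν : ℕ → Measure (Set.Icc (0 : ℝ) K × Set.Icc (0 : ℝ) K),
      (∀ t, IsProbabilityMeasure (ν t)) →
      (∀ E : Set (Set.Icc (0 : ℝ) K), MeasurableSet E →
        ν 0 (E ×ˢ Set.univ) = σ0 E) →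
      (∀ t : ℕ, ∀ E : Set (Set.Icc (0 : ℝ) K), MeasurableSet E →
        ν (t + 1) (E ×ˢ Set.univ) = ∫⁻ q, σX q E ∂ ν t) →
      (1 - lam) * ∑' t : ℕ, lam ^ t * ∫ q, (b q.1 - c q.2) ∂ ν t = γ) := by
  obtain ⟨hlam0, hlam1⟩ := hlam
  have hlow : ∀ s, zero ≤ s := fun s => Subtype.coe_le_coe.mp (hzero.trans_le s.2.1)
  have hhigh : ∀ s, s ≤ top := fun s => Subtype.coe_le_coe.mp (s.2.2.trans_eq htop.symm)
  have hc : ∀ s, c s ∈ Set.Icc 0 (c top) := fun s => ⟨hc0 ▸ hcm (hlow s), hcm (hhigh s)⟩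
  have hbK : 0 < b top := (hc top).1.trans_lt (hbc top (by rw [htop]; exact hK))
  have hweight : 0 < (1 - lam) * b top := mul_pos (by linarith) hbK
  have hp01 : ∀ y, p y ∈ Set.Icc 0 1 := fun y => hp y ▸ equalizer_reaction_mem_Icc hbK hlam0
    (hc y) ((div_le_iff₀ hweight).mp ((le_max_left _ _).trans hp₀l))
    ((le_div_iff₀ hweight).mp (hp₀u.trans (min_le_left _ _)))
  refine ⟨hp01, fun ν hν h0 hstep => ?_⟩
  have hpmeas : Measurable p := by rw [funext hp]; fun_prop
  have hfst0 : (ν 0).fst = twoPointMeasure zero top p₀ :=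
    Measure.fst_eq_of_apply_prod_univ fun E hE => by rw [h0 E hE, hσ0]; rfl
  have hfst : ∀ t, (ν (t + 1)).fst = twoPointMeasure zero top (∫ q, p q.2 ∂ν t) := fun t =>
    Measure.fst_eq_of_apply_prod_univ fun E hE => by
      rw [hstep t E hE]
      exact (lintegral_congr fun q => by rw [hσX]; rfl).trans
        (lintegral_twoPointMeasure_apply (hpmeas.comp measurable_snd) (fun q => hp01 q.2) _ _ _)
  have hpc : ∀ y, lam * b top * p y = c y + (γ - (1 - lam) * p₀ * b top) := fun y => by
    rw [hp y]; field_simp; ring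
  rw [discounted_payoff_of_fst_eq_twoPointMeasure hlam0.le hlam1 hbmeas hb0 hpmeas hp01 hcmeas
    (fun s => (abs_of_nonneg (hc s).1).trans_le (hc s).2) hpc hp₀ hfst0 hfst]
  ring

/-- **Two-point equalizer strategies in the continuous Donation Game.**
For `0 ≤ γ ≤ b(K) − c(K)`, a discount factor `lam ≥ c(K)/b(K)`, and a feasible
initial cooperation probability `p₀`, the reaction probability
`p(y) = (1/lam)((c(y)+γ)/b(K) − (1−lam)p₀)` lies in `[0,1]`, and the two-point
strategy `σX[x,y] = (1−p(y))·δ₀ + p(y)·δ_K` with initial action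
`(1−p₀)·δ₀ + p₀·δ_K` enforces `π_Y = γ`. -/
theorem donation_two_point_equalizer
    (K : ℝ) (hK : 0 < K)
    (b c : Set.Icc (0 : ℝ) K → ℝ) (hbm : Monotone b) (hcm : Monotone c)
    (hbmeas : Measurable b) (hcmeas : Measurable c)
    (zero top : Set.Icc (0 : ℝ) K) (hzero : (zero : ℝ) = 0) (htop : (top : ℝ) = K)
    (hb0 : b zero = 0) (hc0 : c zero = 0)
    (hbc : ∀ s : Set.Icc (0 : ℝ) K, 0 < (s : ℝ) → c s < b s)
    (γ : ℝ) (hγ : 0 ≤ γ ∧ γ ≤ b top - c top)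
    (lam : ℝ) (hlam : lam ∈ Set.Ioo (0 : ℝ) 1)
    (hlam' : c top / b top ≤ lam)
    (p₀ : ℝ) (hp₀ : p₀ ∈ Set.Icc (0 : ℝ) 1)
    (hp₀l : max ((γ - lam * b top + c top) / ((1 - lam) * b top)) 0 ≤ p₀)
    (hp₀u : p₀ ≤ min (γ / ((1 - lam) * b top)) 1)
    (p : Set.Icc (0 : ℝ) K → ℝ)
    (hp : ∀ y, p y = (1 / lam) * ((c y + γ) / b top - (1 - lam) * p₀))
    (σX : Kernel (Set.Icc (0 : ℝ) K × Set.Icc (0 : ℝ) K) (Set.Icc (0 : ℝ) K))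
    (hσX : ∀ x y, σX (x, y) =
      ENNReal.ofReal (1 - p y) • Measure.dirac zero
        + ENNReal.ofReal (p y) • Measure.dirac top)
    (σ0 : Measure (Set.Icc (0 : ℝ) K))
    (hσ0 : σ0 = ENNReal.ofReal (1 - p₀) • Measure.dirac zero
        + ENNReal.ofReal p₀ • Measure.dirac top) :
    (∀ y, 0 ≤ p y ∧ p y ≤ 1) ∧
    (∀ ν : ℕ → Measure (Set.Icc (0 : ℝ) K × Set.Icc (0 : ℝ) K),
      (∀ t, IsProbabilityMeasure (ν t)) →
      (∀ E : Set (Set.Icc (0 : ℝ) K), MeasurableSet E →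
        ν 0 (E ×ˢ Set.univ) = σ0 E) →
      (∀ t : ℕ, ∀ E : Set (Set.Icc (0 : ℝ) K), MeasurableSet E →
        ν (t + 1) (E ×ˢ Set.univ) = ∫⁻ q, σX q E ∂ ν t) →
      (1 - lam) * ∑' t : ℕ, lam ^ t * ∫ q, (b q.1 - c q.2) ∂ ν t = γ) :=
  donation_two_point_equalizer_general K hK b c hcm hbmeas hcmeas zero top hzero htop hb0 hc0 hbc γ
    lam hlam p₀ hp₀ hp₀l hp₀u p hp σX hσX σ0 hσ0
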